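/- arXiv:2303.12851 — 2 statements merged into one kernel-verified Lean document; each statement's English description precedes it below -/
import Mathlib

section
/- Let D be a database and Σ a set of linear TGDs (with non-empty frontiers) such that the atoms of D mention only predicates of sch(Σ). Then the dynamic simplification simple_D(Σ) is simple(D)-weakly-acyclic if and only if simple_D(Σ) is weakly-acyclic; equivalently, every cycle containing a special edge in the dependency graph of simple_D(Σ) is simple(D)-supported. -/
/-! ## A framework for existential rules (TGDs)and the semi-oblivious chase

Constants and variables are both modelled by `ℕ` (two disjoint countably
infinite sets, used in disjoint roles), labeled nulls are modelled by the
inductive type `GTerm.null`.  Atoms carry a predicate symbol from an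
arbitrary type `P` and a list of arguments; positions of a predicate are
pairs `(R, i)` with a 0-based index `i`. -/

/-- An atom: a predicate symbol from `P` applied to a list of arguments from `τ`.
For facts/databases the arguments are constants (`ℕ`); in TGDs they are
variables (`ℕ`); in instances they are ground terms. -/
structure Atom (P : Type) (τ : Type) where
  pred : P
  args : List τ

/-- Apply a substitution to the arguments of an atom. -/
def Atom.map {P τ τ' : Type} (f : τ → τ') (a : Atom P τ) : Atom P τ' :=
  ⟨a.pred, a.args.map f⟩

/-- A TGD `∀x̄∀ȳ (φ(x̄,ȳ) → ∃z̄ ψ(x̄,z̄))`: constant-free, with variables drawn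
from `ℕ` and non-empty body and head (conjunctions of atoms as lists). -/
structure TGD (P : Type) where
  body : List (Atom P ℕ)
  head : List (Atom P ℕ)
  body_ne : body ≠ []
  head_ne : head ≠ []

/-- The set of variables occurring in a list of atoms. -/
def varsOf {P : Type} (A : List (Atom P ℕ)) : Set ℕ := {v | ∃ a ∈ A, v ∈ a.args}

/-- The frontier of a TGD: the variables occurring both in body and head. -/
def TGD.frontier {P : Type} (σ : TGD P) : Set ℕ := varsOf σ.body ∩ varsOf σ.head

/-- The existentially quantified variables of a TGD: head variables not in the body. -/
def TGD.existVars {P : Type} (σ : TGD P) : Set ℕ := varsOf σ.head \ varsOf σ.body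

/-- A TGD is linear if its body consists of a single atom. -/
def TGD.Linear {P : Type} (σ : TGD P) : Prop := ∃ a : Atom P ℕ, σ.body = [a]

/-- A linear TGD is simple-linear if moreover no variable occurs more than once
in its body atom. -/
def TGD.SimpleLinear {P : Type} (σ : TGD P) : Prop :=
  ∃ a : Atom P ℕ, σ.body = [a] ∧ a.args.Nodup

/-- Ground terms: constants from `ℕ`, or labeled nulls `⊥^x_{σ,g}` uniquely
determined by a TGD `σ`, a (frontier) assignment `g`, and a variable `x`. -/
inductive GTerm (P : Type) : Type
  | const : ℕ → GTerm P
  | null : TGD P → (ℕ → GTerm P) → ℕ → GTerm P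

/-- `h` is a homomorphism from the (constant-free) atoms `A` into the set of
atoms `I` (being a substitution on variables, it is the identity on constants). -/
def IsHom {P τ τ' : Type} (h : τ → τ') (A : List (Atom P τ)) (I : Set (Atom P τ')) : Prop :=
  ∀ a ∈ A, a.map h ∈ I

open Classical in
/-- The restriction `h|fr(σ)` of `h` to the frontier of `σ`
(a fixed default value elsewhere). -/
noncomputable def frRestrict {P : Type} (σ : TGD P) (h : ℕ → GTerm P) : ℕ → GTerm P :=
  fun v => if v ∈ σ.frontier then h v else GTerm.const 0

open Classical in
/-- The substitution `μ` of a trigger `(σ,h)`: it agrees with `h` on the frontier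
variables and sends each other (existentially quantified) variable `x` to the
labeled null `⊥^x_{σ,h|fr(σ)}`. -/
noncomputable def triggerSubst {P : Type} (σ : TGD P) (h : ℕ → GTerm P) : ℕ → GTerm P :=
  fun x => if x ∈ σ.frontier then h x else GTerm.null σ (frRestrict σ h) x

/-- The result of a trigger: `result(σ,h) = μ(head(σ))`. -/
noncomputable def triggerResult {P : Type} (σ : TGD P) (h : ℕ → GTerm P) :
    Set (Atom P (GTerm P)) :=
  {ga | ∃ a ∈ σ.head, ga = a.map (triggerSubst σ h)}

/-- A database viewed as an instance (constants as ground terms). -/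
def dbInst {P : Type} (D : Set (Atom P ℕ)) : Set (Atom P (GTerm P)) :=
  {ga | ∃ a ∈ D, ga = a.map GTerm.const}

/-- `chase^i(D,Σ)`: the `i`-th level of the semi-oblivious chase. -/
noncomputable def chaseN {P : Type} (D : Set (Atom P ℕ)) (Sgm : Set (TGD P)) :
    ℕ → Set (Atom P (GTerm P))
  | 0 => dbInst D
  | i + 1 => chaseN D Sgm i ∪
      {ga | ∃ σ ∈ Sgm, ∃ h : ℕ → GTerm P,
        IsHom h σ.body (chaseN D Sgm i) ∧ ga ∈ triggerResult σ h}

/-- The semi-oblivious chase: `chase(D,Σ) = ⋃ i, chase^i(D,Σ)`. -/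
noncomputable def chase {P : Type} (D : Set (Atom P ℕ)) (Sgm : Set (TGD P)) :
    Set (Atom P (GTerm P)) := ⋃ i, chaseN D Sgm i

/-- An instance `I` satisfies a TGD `σ`: every homomorphism from the body into `I`
extends (on the frontier) to a homomorphism from the head into `I`. -/
def SatisfiesTGD {P : Type} (I : Set (Atom P (GTerm P))) (σ : TGD P) : Prop :=
  ∀ h : ℕ → GTerm P, IsHom h σ.body I →
    ∃ h' : ℕ → GTerm P, (∀ x ∈ σ.frontier, h' x = h x) ∧ IsHom h' σ.head I

/-- Variable `x` occurs at position `π = (R,i)` in the body of `σ`. -/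
def bodyPosOf {P : Type} (σ : TGD P) (x : ℕ) (π : P × ℕ) : Prop :=
  ∃ a ∈ σ.body, a.pred = π.1 ∧ a.args[π.2]? = some x

/-- Variable `x` occurs at position `π = (R,i)` in the head of `σ`. -/
def headPosOf {P : Type} (σ : TGD P) (x : ℕ) (π : P × ℕ) : Prop :=
  ∃ a ∈ σ.head, a.pred = π.1 ∧ a.args[π.2]? = some x

/-- The normal edges of the dependency graph `dg(Σ)`: from a body position of a
frontier variable `x` of some `σ ∈ Σ` to a head position of `x`. -/
def normalEdge {P : Type} (Sgm : Set (TGD P)) (π π' : P × ℕ) : Prop :=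
  ∃ σ ∈ Sgm, ∃ x ∈ σ.frontier, bodyPosOf σ x π ∧ headPosOf σ x π'

/-- The special edges of `dg(Σ)`: from a body position of a frontier variable of
some `σ ∈ Σ` to a head position of an existentially quantified variable of `σ`. -/
def specialEdge {P : Type} (Sgm : Set (TGD P)) (π π' : P × ℕ) : Prop :=
  ∃ σ ∈ Sgm, (∃ x ∈ σ.frontier, bodyPosOf σ x π) ∧ ∃ z ∈ σ.existVars, headPosOf σ z π'

/-- An edge of `dg(Σ)`: normal or special. -/
def depEdge {P : Type} (Sgm : Set (TGD P)) (π π' : P × ℕ) : Prop :=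
  normalEdge Sgm π π' ∨ specialEdge Sgm π π'

/-- Predicate `Q` is reachable from predicate `R` w.r.t. `Σ`: either `R = Q` or
there is a path in `dg(Σ)` from a position of `R` to a position of `Q`. -/
def reachPred {P : Type} (Sgm : Set (TGD P)) (R Q : P) : Prop :=
  R = Q ∨ ∃ i j : ℕ, Relation.ReflTransGen (depEdge Sgm) (R, i) (Q, j)

/-- `l` is a (not necessarily simple) cycle, i.e. a closed walk, in `dg(Σ)`
containing a special edge. -/
def IsCycleWithSpecial {P : Type} (Sgm : Set (TGD P)) (l : List (P × ℕ)) : Prop :=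
  2 ≤ l.length ∧ List.Chain' (depEdge Sgm) l ∧ l.head? = l.getLast? ∧
    ∃ k : ℕ, ∃ π π' : P × ℕ, l[k]? = some π ∧ l[k + 1]? = some π' ∧ specialEdge Sgm π π'

/-- The path `l` in `dg(Σ)` is `D`-supported: some atom `R(t̄) ∈ D` and some node
`(P,i)` on `l` are such that `P` is reachable from `R` w.r.t. `Σ`. -/
def SupportedBy {P : Type} (Sgm : Set (TGD P)) (D : Set (Atom P ℕ))
    (l : List (P × ℕ)) : Prop :=
  ∃ a ∈ D, ∃ π ∈ l, reachPred Sgm a.pred π.1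

/-- `Σ` is `D`-weakly-acyclic: no `D`-supported cycle in `dg(Σ)` has a special edge. -/
def DWeaklyAcyclic {P : Type} (D : Set (Atom P ℕ)) (Sgm : Set (TGD P)) : Prop :=
  ¬ ∃ l : List (P × ℕ), IsCycleWithSpecial Sgm l ∧ SupportedBy Sgm D l

/-- `Σ` is weakly-acyclic: no cycle in `dg(Σ)` has a special edge. -/
def WeaklyAcyclic {P : Type} (Sgm : Set (TGD P)) : Prop :=
  ¬ ∃ l : List (P × ℕ), IsCycleWithSpecial Sgm l

/-! ## Simplification of linear TGDs -/

/-- `id_{t̄}(x)`: the (1-based) position in `unique(t̄)` at which `x` appears,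
i.e. the rank of the first occurrence of `x` in `l`. -/
def idOf (l : List ℕ) (x : ℕ) : ℕ := ((l.take (l.idxOf x)).dedup).length + 1

/-- `id(t̄) = (id_{t̄}(t1), ..., id_{t̄}(tn))`. -/
def idTuple (l : List ℕ) : List ℕ := l.map (idOf l)

/-- `unique(t̄)`: keep only the first occurrence of each entry of `l`. -/
def uniqueList (l : List ℕ) : List ℕ := (l.reverse.dedup).reverse

/-- The simplification of an atom `α = R(t̄)`:
the atom `R_{id(t̄)}(unique(t̄))` over the shape predicates `P × List ℕ`. -/
def Atom.simple {P : Type} (a : Atom P ℕ) : Atom (P × List ℕ) ℕ :=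
  ⟨(a.pred, idTuple a.args), uniqueList a.args⟩

/-- The shape of an atom `α = R(t̄)`: the predicate `R_{id(t̄)}`. -/
def Atom.shape {P : Type} (a : Atom P ℕ) : P × List ℕ := (a.pred, idTuple a.args)

/-- `f` is a specialization of the tuple of variables `xs = (x1,...,xn)`:
`f(x1) = x1` and `f(xi) ∈ {f(x1),...,f(x_{i-1}), xi}`. -/
def IsSpecialization (xs : List ℕ) (f : ℕ → ℕ) : Prop :=
  ∀ i : ℕ, ∀ x : ℕ, xs[i]? = some x → f x ∈ (xs.take i).map f ++ [x]

/-- `f` is the `h`-specialization of `xs`: the specialization of `xs` with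
`f(xi) = f(xj)` iff `h(xi) = h(xj)`. -/
def IsHSpecialization (xs : List ℕ) (h : ℕ → ℕ) (f : ℕ → ℕ) : Prop :=
  IsSpecialization xs f ∧ ∀ x ∈ xs, ∀ y ∈ xs, (f x = f y ↔ h x = h y)

open Classical in
/-- The simplification of a linear TGD `σ` with body atom `a` induced by a
specialization `f`: the simple-linear TGD
`simple(R(f(x̄))) → ∃z̄ simple(ψ(f(ȳ),z̄))` (with `f` applied to the universally
quantified variables only). -/
noncomputable def TGD.simplifyBy {P : Type} (σ : TGD P) (a : Atom P ℕ) (f : ℕ → ℕ) :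
    TGD (P × List ℕ) where
  body := [(a.map f).simple]
  head := σ.head.map fun b =>
    (b.map fun v => if v ∈ varsOf σ.body then f v else v).simple
  body_ne := by simp
  head_ne := by simpa using σ.head_ne

/-- `simple(σ)`: all simplifications of a linear TGD `σ` induced by some
specialization of its body tuple. -/
noncomputable def simpleSet {P : Type} (σ : TGD P) : Set (TGD (P × List ℕ)) :=
  {τ | ∃ a f, σ.body = [a] ∧ IsSpecialization a.args f ∧ τ = σ.simplifyBy a f}

/-- The (static) simplification `simple(Σ) = ⋃_{σ ∈ Σ} simple(σ)`. -/
noncomputable def simplify {P : Type} (Sgm : Set (TGD P)) : Set (TGD (P × List ℕ)) :=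
  ⋃ σ ∈ Sgm, simpleSet σ

/-- The predicates of `sch(Σ)`, together with their arities. -/
def schPreds {P : Type} (Sgm : Set (TGD P)) : Set (P × ℕ) :=
  {Rn | ∃ σ ∈ Sgm, ∃ a : Atom P ℕ, (a ∈ σ.body ∨ a ∈ σ.head) ∧
    a.pred = Rn.1 ∧ a.args.length = Rn.2}

/-- `shape(Σ)`: all shapes `R_{id(t̄)}` with `R ∈ sch(Σ)` and `t̄` a tuple of the
arity of `R`. -/
def shapesOf {P : Type} (Sgm : Set (TGD P)) : Set (P × List ℕ) :=
  {s | ∃ Rn ∈ schPreds Sgm, ∃ t : List ℕ, t.length = Rn.2 ∧ s = (Rn.1, idTuple t)}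

/-- `DB[S]`: the database induced by a set of shapes,
`{R(id(t̄)) : R_{id(t̄)} ∈ S}`. -/
def DBof {P : Type} (S : Set (P × List ℕ)) : Set (Atom P ℕ) :=
  {a | (a.pred, a.args) ∈ S}

/-- The immediate consequences of a set of shapes `S` and `Σ`: the shapes of
`shape(Σ)` that are in `S`, or occur in the head of the simplification of some
`σ ∈ Σ` induced by the `h`-specialization of its body tuple, for some
homomorphism `h` from the body to `DB[S]`. -/
noncomputable def ImmCons {P : Type} (Sgm : Set (TGD P)) (S : Set (P × List ℕ)) :
    Set (P × List ℕ) :=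
  S ∪ {s | s ∈ shapesOf Sgm ∧ ∃ σ ∈ Sgm, ∃ (a : Atom P ℕ) (f h : ℕ → ℕ),
    σ.body = [a] ∧ IsHom h [a] (DBof S) ∧ IsHSpecialization a.args h f ∧
    ∃ b ∈ (σ.simplifyBy a f).head, b.pred = s}

/-- `Γ_Σ^i(S)`: iterates of the immediate consequence operator. -/
noncomputable def GammaIter {P : Type} (Sgm : Set (TGD P)) (S : Set (P × List ℕ)) :
    ℕ → Set (P × List ℕ)
  | 0 => S
  | i + 1 => ImmCons Sgm (GammaIter Sgm S i)

/-- `Σ(S) = ⋃_{i ≥ 0} Γ_Σ^i(S)`. -/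
noncomputable def SigmaClosure {P : Type} (Sgm : Set (TGD P)) (S : Set (P × List ℕ)) :
    Set (P × List ℕ) := ⋃ i, GammaIter Sgm S i

/-- The dynamic simplification `simple_D(Σ)`: the simplifications of TGDs of `Σ`
induced by `h`-specializations, for homomorphisms `h` from their bodies to
`DB[Σ(shape(D))]`. -/
noncomputable def dynSimplify {P : Type} (D : Set (Atom P ℕ)) (Sgm : Set (TGD P)) :
    Set (TGD (P × List ℕ)) :=
  {τ | ∃ σ ∈ Sgm, ∃ (a : Atom P ℕ) (f h : ℕ → ℕ), σ.body = [a] ∧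
    IsHom h [a] (DBof (SigmaClosure Sgm (Atom.shape '' D))) ∧
    IsHSpecialization a.args h f ∧ τ = σ.simplifyBy a f}



lemma dedupLen_map_eq {α β γ : Type*} [DecidableEq β] [DecidableEq γ]
    (f : α → β) (g : α → γ) :
    ∀ (t : List α), (∀ x ∈ t, ∀ y ∈ t, (f x = f y ↔ g x = g y)) →
      ((t.map f).dedup).length = ((t.map g).dedup).length
  | [], _ => rfl
  | a :: t, hp => by
    have hmem : f a ∈ t.map f ↔ g a ∈ t.map g := by
      simp only [List.mem_map]
      constructor
      · rintro ⟨y, hy, hfy⟩; exact ⟨y, hy, (hp y (by simp [hy]) a (by simp)).1 hfy⟩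
      · rintro ⟨y, hy, hgy⟩; exact ⟨y, hy, (hp y (by simp [hy]) a (by simp)).2 hgy⟩
    have ih := dedupLen_map_eq f g t (fun x hx y hy => hp x (by simp [hx]) y (by simp [hy]))
    by_cases h : f a ∈ t.map f
    · rw [List.map_cons, List.map_cons, List.dedup_cons_of_mem h,
        List.dedup_cons_of_mem (hmem.1 h)]; exact ih
    · rw [List.map_cons, List.map_cons, List.dedup_cons_of_notMem h,
        List.dedup_cons_of_notMem (fun hc => h (hmem.2 hc))]
      simp [ih]

lemma indexOf_map_eq (f g : ℕ → ℕ) (x : ℕ) :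
    ∀ (t : List ℕ), (∀ z ∈ t, (f z = f x ↔ g z = g x)) →
      (t.map f).idxOf (f x) = (t.map g).idxOf (g x)
  | [], _ => rfl
  | a :: t, hp => by
    by_cases h : f a = f x
    · rw [List.map_cons, List.map_cons, List.idxOf_cons_eq _ h,
        List.idxOf_cons_eq _ ((hp a (by simp)).1 h)]
    · rw [List.map_cons, List.map_cons, List.idxOf_cons_ne _ h,
        List.idxOf_cons_ne _ (fun hc => h ((hp a (by simp)).2 hc)),
        indexOf_map_eq f g x t (fun z hz => hp z (by simp [hz]))]

lemma idOf_map_eq (f g : ℕ → ℕ) (l : List ℕ) (x : ℕ) (hx : x ∈ l)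
    (hp : ∀ u ∈ l, ∀ v ∈ l, (f u = f v ↔ g u = g v)) :
    idOf (l.map f) (f x) = idOf (l.map g) (g x) := by
  unfold idOf
  have hidx : (l.map f).idxOf (f x) = (l.map g).idxOf (g x) :=
    indexOf_map_eq f g x l (fun z hz => hp z hz x hx)
  rw [hidx, ← List.map_take, ← List.map_take,
    dedupLen_map_eq f g _ (fun u hu v hv =>
      hp u (List.take_subset _ _ hu) v (List.take_subset _ _ hv))]

lemma idTuple_map_eq (f g : ℕ → ℕ) (l : List ℕ)
    (hp : ∀ u ∈ l, ∀ v ∈ l, (f u = f v ↔ g u = g v)) :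
    idTuple (l.map f) = idTuple (l.map g) := by
  unfold idTuple
  rw [List.map_map, List.map_map]
  exact List.map_congr_left (fun x hx => idOf_map_eq f g l x hx hp)



lemma mem_take_of_indexOf_lt {l : List ℕ} {x n : ℕ} (hx : x ∈ l)
    (h : l.idxOf x < n) : x ∈ l.take n := by
  by_contra hc
  rcases le_or_gt n l.length with hn | hn
  · have h2 := List.idxOf_append_of_notMem hc (l₂ := l.drop n)
    rw [List.take_append_drop, List.length_take, min_eq_left hn] at h2
    omega
  · rw [List.take_of_length_le hn.le] at hc; exact hc hx

lemma indexOf_lt_of_mem_take {l : List ℕ} {x n : ℕ} (h : x ∈ l.take n) :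
    l.idxOf x < n := by
  have h2 := List.idxOf_append_of_mem h (l₂ := l.drop n)
  rw [List.take_append_drop] at h2
  have h3 : (l.take n).idxOf x < (l.take n).length := List.idxOf_lt_length_iff.2 h
  have h4 : (l.take n).length ≤ n := by simp [List.length_take]
  omega

lemma idOf_lt {l : List ℕ} {x y : ℕ} (hx : x ∈ l) (hy : y ∈ l)
    (h : l.idxOf x < l.idxOf y) : idOf l x < idOf l y := by
  unfold idOf
  have hss : (l.take (l.idxOf x)).toFinset ⊂ (l.take (l.idxOf y)).toFinset := by
    constructor
    · intro a ha
      rw [List.mem_toFinset] at *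
      have : a ∈ (l.take (l.idxOf y)).take (l.idxOf x) := by
        rwa [List.take_take, min_eq_left h.le]
      exact List.take_subset _ _ this
    · intro hsub
      have hxin : x ∈ l.take (l.idxOf y) := mem_take_of_indexOf_lt hx h
      have hxnotin : x ∉ l.take (l.idxOf x) := fun hc =>
        lt_irrefl _ (indexOf_lt_of_mem_take hc)
      exact hxnotin (List.mem_toFinset.1 (hsub (List.mem_toFinset.2 hxin)))
  have := Finset.card_lt_card hss
  rw [List.card_toFinset, List.card_toFinset] at this
  omega

lemma idOf_inj_on {l : List ℕ} {x y : ℕ} (hx : x ∈ l) (hy : y ∈ l) :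
    idOf l x = idOf l y ↔ x = y := by
  constructor
  · intro h
    rcases lt_trichotomy (l.idxOf x) (l.idxOf y) with hlt | heq | hgt
    · exact absurd h (ne_of_lt (idOf_lt hx hy hlt))
    · exact (List.idxOf_inj hx).1 heq
    · exact absurd h.symm (ne_of_lt (idOf_lt hy hx hgt))
  · rintro rfl; rfl

lemma idOf_map_id (f : ℕ → ℕ) (l : List ℕ)
    (hf : ∀ u ∈ l, ∀ v ∈ l, (f u = f v ↔ u = v)) (x : ℕ) (hx : x ∈ l) :
    idOf (l.map f) (f x) = idOf l x := by
  have := idOf_map_eq f id l x hx (by simpa using hf)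
  simpa using this

lemma idTuple_idem (l : List ℕ) : idTuple (idTuple l) = idTuple l := by
  unfold idTuple
  rw [List.map_map]
  refine List.map_congr_left fun x hx => ?_
  exact idOf_map_id (idOf l) l (fun u hu v hv => idOf_inj_on hu hv) x hx

lemma mem_uniqueList {l : List ℕ} {x : ℕ} : x ∈ uniqueList l ↔ x ∈ l := by
  simp [uniqueList]

lemma uniqueList_length (l : List ℕ) :
    (uniqueList l).length = (idTuple l).dedup.length := by
  have h1 : (uniqueList l).length = l.dedup.length := by
    rw [uniqueList, List.length_reverse, ← List.card_toFinset, ← List.card_toFinset,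
      List.toFinset_reverse]
  have h2 : (idTuple l).dedup.length = l.dedup.length := by
    have := dedupLen_map_eq (idOf l) id l (fun u hu v hv => by simpa using idOf_inj_on hu hv)
    simpa [idTuple] using this
  omega


/-! ### Auxiliary lemmas for Statement 11 -/

lemma DBof_mono {P : Type} {S T : Set (P × List ℕ)} (h : S ⊆ T) : DBof S ⊆ DBof T :=
  fun _ ha => h ha

lemma mem_varsOf_single {P : Type} {A : Atom P ℕ} {v : ℕ} :
    v ∈ varsOf [A] ↔ v ∈ A.args := by
  simp [varsOf]

lemma head_args_length {P : Type} {σ : TGD P} {a : Atom P ℕ} {f : ℕ → ℕ}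
    {b : Atom (P × List ℕ) ℕ} (hb : b ∈ (σ.simplifyBy a f).head) :
    b.args.length = b.pred.2.dedup.length := by
  rcases List.mem_map.1 hb with ⟨c, hc, rfl⟩
  exact uniqueList_length _

lemma head_shape_mem_shapesOf {P : Type} {Sgm : Set (TGD P)} {σ : TGD P} (hσ : σ ∈ Sgm)
    {a : Atom P ℕ} {f : ℕ → ℕ} {b : Atom (P × List ℕ) ℕ}
    (hb : b ∈ (σ.simplifyBy a f).head) : b.pred ∈ shapesOf Sgm := by
  rcases List.mem_map.1 hb with ⟨c, hc, rfl⟩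
  refine ⟨(c.pred, c.args.length), ⟨σ, hσ, c, Or.inr hc, rfl, rfl⟩, _, ?_, rfl⟩
  simp [Atom.map]

lemma main_ind {P : Type} (D : Set (Atom P ℕ)) (Sgm : Set (TGD P))
    (hfr : ∀ σ ∈ Sgm, σ.frontier.Nonempty) :
    ∀ i, ∀ s ∈ GammaIter Sgm (Atom.shape '' D) i,
      (∃ t : List ℕ, s.2 = idTuple t) ∧
      ∃ d ∈ D, ∀ j < s.2.dedup.length, ∃ k,
        Relation.ReflTransGen (depEdge (dynSimplify D Sgm)) (Atom.shape d, k) (s, j) := by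
  intro i
  induction i with
  | zero =>
    rintro s ⟨d, hd, rfl⟩
    exact ⟨⟨d.args, rfl⟩, d, hd, fun j _ => ⟨j, Relation.ReflTransGen.refl⟩⟩
  | succ i ih =>
    rintro s hs
    rcases hs with hs | ⟨hsh, σ, hσ, a, f, h, hbody, hhom, hspec, b, hb, hbp⟩
    · exact ih s hs
    constructor
    · rcases hsh with ⟨Rn, _, t, _, hst⟩
      exact ⟨t, by rw [hst]⟩
    have hmem : ((a.pred, a.args.map h) : P × List ℕ) ∈ GammaIter Sgm (Atom.shape '' D) i :=
      hhom a (by simp)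
    obtain ⟨⟨t0, ht0⟩, d, hd, hpath⟩ := ih _ hmem
    have ht0' : a.args.map h = idTuple t0 := ht0
    have key : idTuple (a.args.map f) = a.args.map h := by
      rw [idTuple_map_eq f h a.args hspec.2, ht0', idTuple_idem]
    have hτ : σ.simplifyBy a f ∈ dynSimplify D Sgm := by
      refine ⟨σ, hσ, a, f, h, hbody, ?_, hspec, rfl⟩
      exact fun x hx => DBof_mono (Set.subset_iUnion _ i) (hhom x hx)
    have hA : (σ.simplifyBy a f).body = [Atom.simple (a.map f)] := rfl
    have hApred : (Atom.simple (a.map f)).pred = ((a.pred, a.args.map h) : P × List ℕ) := by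
      show ((a.pred, idTuple (a.args.map f)) : P × List ℕ) = _
      rw [key]
    have hAlen : (Atom.simple (a.map f)).args.length = (a.args.map h).dedup.length := by
      show (uniqueList (a.args.map f)).length = _
      rw [uniqueList_length, key]
    refine ⟨d, hd, ?_⟩
    intro j hj
    have hlenb : b.args.length = s.2.dedup.length := by
      rw [← hbp]; exact head_args_length hb
    have hjb : j < b.args.length := by rw [hlenb]; exact hj
    obtain ⟨v, hv⟩ : ∃ v, b.args[j]? = some v := ⟨b.args[j]'hjb, List.getElem?_eq_getElem hjb⟩
    have hvmem : v ∈ b.args := by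
      rw [List.mem_iff_getElem?]; exact ⟨j, hv⟩
    have hvh : v ∈ varsOf (σ.simplifyBy a f).head := ⟨b, hb, hvmem⟩
    have hHead : headPosOf (σ.simplifyBy a f) v (s, j) := ⟨b, hb, hbp, hv⟩
    by_cases hvb : v ∈ varsOf (σ.simplifyBy a f).body
    · have hfront : v ∈ (σ.simplifyBy a f).frontier := ⟨hvb, hvh⟩
      have hvA : v ∈ (Atom.simple (a.map f)).args := by
        rw [hA] at hvb; exact mem_varsOf_single.1 hvb
      obtain ⟨j2, hj2⟩ := List.mem_iff_getElem?.1 hvA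
      obtain ⟨hj2lt, -⟩ := List.getElem?_eq_some_iff.1 hj2
      obtain ⟨k, p⟩ := hpath j2 (by
        show j2 < (a.args.map h).dedup.length
        rw [← hAlen]; exact hj2lt)
      have hbodyPos : bodyPosOf (σ.simplifyBy a f) v (((a.pred, a.args.map h) : P × List ℕ), j2) :=
        ⟨Atom.simple (a.map f), by rw [hA]; exact List.mem_singleton_self _, hApred, hj2⟩
      have hedge : depEdge (dynSimplify D Sgm) (((a.pred, a.args.map h) : P × List ℕ), j2) (s, j) :=
        Or.inl ⟨_, hτ, v, hfront, hbodyPos, hHead⟩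
      exact ⟨k, p.tail hedge⟩
    · have hexist : v ∈ (σ.simplifyBy a f).existVars := ⟨hvh, hvb⟩
      obtain ⟨x, hxb, hxh⟩ := hfr σ hσ
      have hxa : x ∈ a.args := by
        rw [hbody] at hxb; exact mem_varsOf_single.1 hxb
      have hfxA : f x ∈ (Atom.simple (a.map f)).args := by
        show f x ∈ uniqueList (a.args.map f)
        exact mem_uniqueList.2 (List.mem_map.2 ⟨x, hxa, rfl⟩)
      obtain ⟨c', hc', hxc'⟩ := hxh
      have hfxhd : f x ∈ varsOf (σ.simplifyBy a f).head := by
        refine ⟨_, List.mem_map.mpr ⟨c', hc', rfl⟩, ?_⟩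
        show f x ∈ uniqueList _
        refine mem_uniqueList.2 (List.mem_map.2 ⟨x, hxc', ?_⟩)
        simp [hxb]
      have hfront : f x ∈ (σ.simplifyBy a f).frontier :=
        ⟨⟨Atom.simple (a.map f), by rw [hA]; exact List.mem_singleton_self _, hfxA⟩, hfxhd⟩
      obtain ⟨j2, hj2⟩ := List.mem_iff_getElem?.1 hfxA
      obtain ⟨hj2lt, -⟩ := List.getElem?_eq_some_iff.1 hj2
      obtain ⟨k, p⟩ := hpath j2 (by
        show j2 < (a.args.map h).dedup.length
        rw [← hAlen]; exact hj2lt)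
      have hbodyPos : bodyPosOf (σ.simplifyBy a f) (f x)
          (((a.pred, a.args.map h) : P × List ℕ), j2) :=
        ⟨Atom.simple (a.map f), by rw [hA]; exact List.mem_singleton_self _, hApred, hj2⟩
      have hedge : depEdge (dynSimplify D Sgm) (((a.pred, a.args.map h) : P × List ℕ), j2) (s, j) :=
        Or.inr ⟨_, hτ, ⟨f x, hfront, hbodyPos⟩, v, hexist, hHead⟩
      exact ⟨k, p.tail hedge⟩

lemma supp_head {P : Type} (D : Set (Atom P ℕ)) (Sgm : Set (TGD P))
    (hfr : ∀ σ ∈ Sgm, σ.frontier.Nonempty) {τ : TGD (P × List ℕ)}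
    (hτ : τ ∈ dynSimplify D Sgm) {b : Atom (P × List ℕ) ℕ} (hb : b ∈ τ.head)
    {j : ℕ} {v : ℕ} (hjv : b.args[j]? = some v) :
    ∃ d ∈ D, ∃ k, Relation.ReflTransGen (depEdge (dynSimplify D Sgm))
      (Atom.shape d, k) (b.pred, j) := by
  obtain ⟨σ, hσ, a, f, h, hbody, hhom, hspec, rfl⟩ := hτ
  have hmem : ((a.pred, a.args.map h) : P × List ℕ) ∈
      SigmaClosure Sgm (Atom.shape '' D) := hhom a (by simp)
  obtain ⟨i0, hmem0⟩ := Set.mem_iUnion.1 hmem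
  have hbs : b.pred ∈ GammaIter Sgm (Atom.shape '' D) (i0 + 1) := by
    refine Or.inr ⟨head_shape_mem_shapesOf hσ hb, σ, hσ, a, f, h, hbody, ?_, hspec, b, hb, rfl⟩
    intro x hx
    rcases List.mem_singleton.1 hx with rfl
    exact hmem0
  obtain ⟨-, d, hd, hpath⟩ := main_ind D Sgm hfr (i0 + 1) _ hbs
  obtain ⟨hjlt, -⟩ := List.getElem?_eq_some_iff.1 hjv
  obtain ⟨k, p⟩ := hpath j (by rw [← head_args_length hb]; exact hjlt)
  exact ⟨d, hd, k, p⟩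

/-- `simple_D(Σ)` is `simple(D)`-weakly-acyclic iff it is
weakly-acyclic; equivalently, every cycle containing a special edge in the
dependency graph of `simple_D(Σ)` is `simple(D)`-supported. -/
theorem statement11 {P : Type} (D : Set (Atom P ℕ)) (Sgm : Set (TGD P))
    (hD : D.Finite) (hSgm : Sgm.Finite)
    (hlin : ∀ σ ∈ Sgm, σ.Linear)
    (hfr : ∀ σ ∈ Sgm, σ.frontier.Nonempty)
    (hsch : ∀ a ∈ D, (a.pred, a.args.length) ∈ schPreds Sgm) :
    (DWeaklyAcyclic (Atom.simple '' D) (dynSimplify D Sgm) ↔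
        WeaklyAcyclic (dynSimplify D Sgm)) ∧
      ∀ l : List ((P × List ℕ) × ℕ), IsCycleWithSpecial (dynSimplify D Sgm) l →
        SupportedBy (dynSimplify D Sgm) (Atom.simple '' D) l := by
  have supp : ∀ l : List ((P × List ℕ) × ℕ), IsCycleWithSpecial (dynSimplify D Sgm) l →
      SupportedBy (dynSimplify D Sgm) (Atom.simple '' D) l := by
    intro l hl
    obtain ⟨hlen, hchain, -, -⟩ := hl
    have h1 : 1 < l.length := hlen
    have hedge : depEdge (dynSimplify D Sgm) (l.get ⟨0, by omega⟩) (l.get ⟨1, h1⟩) := by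
      have := List.isChain_iff_getElem.1 hchain 0 (by omega)
      simpa using this
    set π := l.get ⟨1, h1⟩ with hπ
    have hπl : π ∈ l := List.get_mem l ⟨1, h1⟩
    have hhp : ∃ τ ∈ dynSimplify D Sgm, ∃ x, headPosOf τ x π := by
      rcases hedge with ⟨τ, hτ, x, _, _, hp⟩ | ⟨τ, hτ, _, z, _, hp⟩
      · exact ⟨τ, hτ, x, hp⟩
      · exact ⟨τ, hτ, z, hp⟩
    obtain ⟨τ, hτ, x, b, hb, hbpred, hbidx⟩ := hhp
    obtain ⟨d, hd, k, p⟩ := supp_head D Sgm hfr hτ hb hbidx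
    refine ⟨Atom.simple d, ⟨d, hd, rfl⟩, π, hπl, Or.inr ⟨k, π.2, ?_⟩⟩
    have : (b.pred, π.2) = (π.1, π.2) := by rw [hbpred]
    rw [← this]
    exact p
  refine ⟨⟨fun hdwa hc => ?_, fun hwa hc => ?_⟩, supp⟩
  · obtain ⟨l, hl⟩ := hc
    exact hdwa ⟨l, hl, supp l hl⟩
  · obtain ⟨l, hl, -⟩ := hc
    exact hwa ⟨l, hl⟩
end

section
/- Let Σ be a set of TGDs (with non-empty frontiers) that is weakly-acyclic, i.e., the dependency graph dg(Σ) has no cycle containing a special edge. Then for every database D, the semi-oblivious chase instance chase(D,Σ) is finite. -/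
/-! ### Auxiliary development for Statement 17 -/

section Aux

variable {P : Type}

/-- Term `t` occurs at position `π` in the ground atom `ga`. -/
def occursAt (t : GTerm P) (π : P × ℕ) (ga : Atom P (GTerm P)) : Prop :=
  ga.pred = π.1 ∧ ga.args[π.2]? = some t

/-- There is a path in `dg(Σ)` from `x` to `y` containing a special edge. -/
def SpecPath (Sgm : Set (TGD P)) (x y : P × ℕ) : Prop :=
  ∃ u v, Relation.ReflTransGen (depEdge Sgm) x u ∧ specialEdge Sgm u v ∧
    Relation.ReflTransGen (depEdge Sgm) v y

/-- The (relevant) positions of `Σ`. -/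
def posSet (Sgm : Set (TGD P)) : Set (P × ℕ) :=
  {π | ∃ σ ∈ Sgm, ∃ a : Atom P ℕ, (a ∈ σ.body ∨ a ∈ σ.head) ∧ a.pred = π.1 ∧
    π.2 < a.args.length}

/-- The rank of a position. -/
noncomputable def rank (Sgm : Set (TGD P)) (π : P × ℕ) : ℕ :=
  {x | SpecPath Sgm x π}.ncard

lemma varsOf_finite (A : List (Atom P ℕ)) : (varsOf A).Finite := by
  have : varsOf A ⊆ ⋃ a ∈ {a | a ∈ A}, {v | v ∈ a.args} := by
    rintro v ⟨a, ha, hv⟩; exact Set.mem_biUnion ha hv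
  exact (Set.Finite.biUnion A.finite_toSet (fun a _ => a.args.finite_toSet)).subset this

lemma frontier_finite (σ : TGD P) : σ.frontier.Finite :=
  (varsOf_finite σ.body).subset Set.inter_subset_left

lemma posSet_finite {Sgm : Set (TGD P)} (hSgm : Sgm.Finite) : (posSet Sgm).Finite := by
  have : posSet Sgm ⊆ ⋃ σ ∈ Sgm, ⋃ a ∈ {a | a ∈ σ.body ∨ a ∈ σ.head},
      (fun i => (a.pred, i)) '' (Set.Iio a.args.length) := by
    rintro ⟨p, i⟩ ⟨σ, hσ, a, ha, hpred, hlen⟩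
    refine Set.mem_biUnion hσ (Set.mem_biUnion ha ⟨i, hlen, ?_⟩)
    simp [hpred]
  refine (Set.Finite.biUnion hSgm (fun σ _ => ?_)).subset this
  have hfin : {a : Atom P ℕ | a ∈ σ.body ∨ a ∈ σ.head}.Finite := by
    have := σ.body.finite_toSet.union σ.head.finite_toSet
    exact this.subset (by rintro a (h | h) <;> [exact Or.inl h; exact Or.inr h])
  exact Set.Finite.biUnion hfin (fun a _ => (Set.finite_Iio _).image _)

lemma bodyPos_mem_posSet {Sgm : Set (TGD P)} {σ : TGD P} (hσ : σ ∈ Sgm) {x : ℕ}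
    {π : P × ℕ} (h : bodyPosOf σ x π) : π ∈ posSet Sgm := by
  obtain ⟨a, ha, hpred, hget⟩ := h
  obtain ⟨hlt, -⟩ := List.getElem?_eq_some_iff.1 hget
  exact ⟨σ, hσ, a, Or.inl ha, hpred, hlt⟩

lemma edge_src_mem_posSet {Sgm : Set (TGD P)} {π π' : P × ℕ} (h : depEdge Sgm π π') :
    π ∈ posSet Sgm := by
  rcases h with ⟨σ, hσ, x, hx, hb, -⟩ | ⟨σ, hσ, ⟨x, hx, hb⟩, -⟩ <;>
    exact bodyPos_mem_posSet hσ hb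

lemma specPath_src_mem_posSet {Sgm : Set (TGD P)} {x y : P × ℕ} (h : SpecPath Sgm x y) :
    x ∈ posSet Sgm := by
  obtain ⟨u, v, hxu, hsp, -⟩ := h
  rcases (Relation.ReflTransGen.cases_head hxu) with rfl | ⟨w, hw, -⟩
  · obtain ⟨σ, hσ, ⟨z, hz, hb⟩, -⟩ := hsp
    exact bodyPos_mem_posSet hσ hb
  · exact edge_src_mem_posSet hw

lemma specPath_set_finite {Sgm : Set (TGD P)} (hSgm : Sgm.Finite) (π : P × ℕ) :
    {x | SpecPath Sgm x π}.Finite :=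
  (posSet_finite hSgm).subset (fun _ h => specPath_src_mem_posSet h)

/-- Weak acyclicity makes `SpecPath` irreflexive. -/
lemma specPath_irrefl {Sgm : Set (TGD P)} (hwa : WeaklyAcyclic Sgm) (π : P × ℕ) :
    ¬ SpecPath Sgm π π := by
  rintro ⟨u, v, hpu, hsp, hvp⟩
  obtain ⟨l1, hc1, hl1⟩ := List.exists_isChain_cons_of_relationReflTransGen hpu
  obtain ⟨l2, hc2, hl2⟩ := List.exists_isChain_cons_of_relationReflTransGen hvp
  apply hwa
  refine ⟨(π :: l1) ++ (v :: l2), ?_, ?_, ?_, l1.length, u, v, ?_, ?_, hsp⟩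
  · simp; omega
  · refine List.IsChain.append hc1 hc2 ?_
    intro a ha b hb
    have : a = u := by
      rw [List.getLast?_eq_getLast (l := π :: l1) (by simp)] at ha
      simpa [hl1] using ha.symm
    have : b = v := by simpa using hb.symm
    subst_vars; exact Or.inr hsp
  · have h1 : ((π :: l1) ++ (v :: l2)).head? = some π := rfl
    rw [h1, List.getLast?_append, List.getLast?_eq_getLast (l := v :: l2) (by simp), hl2]
    rfl
  · rw [List.getElem?_append_left (by simp)]
    have : (π :: l1)[l1.length]? = (π :: l1).getLast? := by
      rw [List.getLast?_eq_getElem?]; simp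
    rw [this, List.getLast?_eq_getLast (l := π :: l1) (by simp), hl1]
  · rw [List.getElem?_append_right (by simp)]
    simp

lemma specPath_tail {Sgm : Set (TGD P)} {x y z : P × ℕ} (h : SpecPath Sgm x y)
    (e : depEdge Sgm y z) : SpecPath Sgm x z := by
  obtain ⟨u, v, h1, h2, h3⟩ := h
  exact ⟨u, v, h1, h2, h3.tail e⟩

lemma rank_le_of_normal {Sgm : Set (TGD P)} (hSgm : Sgm.Finite) {π₀ π : P × ℕ}
    (h : normalEdge Sgm π₀ π) : rank Sgm π₀ ≤ rank Sgm π := by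
  refine Set.ncard_le_ncard ?_ (specPath_set_finite hSgm π)
  exact fun x hx => specPath_tail hx (Or.inl h)

lemma rank_lt_of_special {Sgm : Set (TGD P)} (hSgm : Sgm.Finite) (hwa : WeaklyAcyclic Sgm)
    {π₀ π : P × ℕ} (h : specialEdge Sgm π₀ π) : rank Sgm π₀ < rank Sgm π := by
  have hsub : insert π₀ {x | SpecPath Sgm x π₀} ⊆ {x | SpecPath Sgm x π} := by
    rintro x (rfl | hx)
    · exact ⟨x, π, Relation.ReflTransGen.refl, h, Relation.ReflTransGen.refl⟩
    · exact specPath_tail hx (Or.inr h)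
  have hne : π₀ ∉ {x | SpecPath Sgm x π₀} := specPath_irrefl hwa π₀
  calc rank Sgm π₀ < (insert π₀ {x | SpecPath Sgm x π₀}).ncard := by
        rw [Set.ncard_insert_of_notMem hne (specPath_set_finite hSgm π₀)]
        exact Nat.lt_succ_self _
    _ ≤ rank Sgm π := Set.ncard_le_ncard hsub (specPath_set_finite hSgm π)

lemma rank_le_ncard {Sgm : Set (TGD P)} (hSgm : Sgm.Finite) (π : P × ℕ) :
    rank Sgm π ≤ (posSet Sgm).ncard :=
  Set.ncard_le_ncard (fun _ h => specPath_src_mem_posSet h) (posSet_finite hSgm)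

/-- Finite universes of terms. -/
def TSet (Sgm : Set (TGD P)) (D : Set (Atom P ℕ)) : ℕ → Set (GTerm P)
  | 0 => {t | ∃ c, (∃ a ∈ D, c ∈ a.args) ∧ t = GTerm.const c}
  | r + 1 => TSet Sgm D r ∪ {t | ∃ σ ∈ Sgm, ∃ x ∈ varsOf σ.head, ∃ g : ℕ → GTerm P,
      (∀ v ∈ σ.frontier, g v ∈ TSet Sgm D r) ∧ (∀ v ∉ σ.frontier, g v = GTerm.const 0) ∧
      t = GTerm.null σ g x}

lemma TSet_mono {Sgm : Set (TGD P)} {D : Set (Atom P ℕ)} :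
    ∀ {r r' : ℕ}, r ≤ r' → TSet Sgm D r ⊆ TSet Sgm D r' := by
  intro r r' h
  induction r' with
  | zero => have : r = 0 := by omega
            subst this; exact subset_rfl
  | succ n ih =>
    rcases Nat.eq_or_lt_of_le h with rfl | hlt
    · exact subset_rfl
    · exact (ih (by omega)).trans (by simp [TSet, Set.subset_union_left])

lemma funset_finite {α : Type} (F : Set ℕ) (hF : F.Finite) (V : Set α) (hV : V.Finite)
    (c : α) : {g : ℕ → α | (∀ v ∈ F, g v ∈ V) ∧ ∀ v ∉ F, g v = c}.Finite := by
  haveI := hF.to_subtype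
  apply Set.Finite.of_finite_image (f := fun g (v : F) => g v.1)
  · refine Set.Finite.subset (Set.Finite.pi (fun _ : F => hV)) ?_
    rintro f ⟨g, ⟨hg1, -⟩, rfl⟩
    exact fun v _ => hg1 v.1 v.2
  · rintro g₁ ⟨h1, h1'⟩ g₂ ⟨h2, h2'⟩ heq
    funext v
    by_cases hv : v ∈ F
    · exact congrFun heq ⟨v, hv⟩
    · rw [h1' v hv, h2' v hv]

lemma TSet_finite {Sgm : Set (TGD P)} {D : Set (Atom P ℕ)} (hSgm : Sgm.Finite)
    (hD : D.Finite) : ∀ r, (TSet Sgm D r).Finite := by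
  intro r
  induction r with
  | zero =>
    have : TSet Sgm D 0 ⊆ GTerm.const '' {c | ∃ a ∈ D, c ∈ a.args} := by
      rintro t ⟨c, hc, rfl⟩; exact ⟨c, hc, rfl⟩
    refine Set.Finite.subset (Set.Finite.image _ ?_) this
    have : {c | ∃ a ∈ D, c ∈ a.args} ⊆ ⋃ a ∈ D, {c | c ∈ a.args} := by
      rintro c ⟨a, ha, hc⟩; exact Set.mem_biUnion ha hc
    exact (Set.Finite.biUnion hD (fun a _ => a.args.finite_toSet)).subset this
  | succ n ih =>
    refine Set.Finite.union ih ?_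
    have hsub : {t | ∃ σ ∈ Sgm, ∃ x ∈ varsOf σ.head, ∃ g : ℕ → GTerm P,
        (∀ v ∈ σ.frontier, g v ∈ TSet Sgm D n) ∧
        (∀ v ∉ σ.frontier, g v = GTerm.const 0) ∧ t = GTerm.null σ g x} ⊆
        ⋃ σ ∈ Sgm, ⋃ x ∈ varsOf σ.head,
          (fun g => GTerm.null σ g x) '' {g : ℕ → GTerm P |
            (∀ v ∈ σ.frontier, g v ∈ TSet Sgm D n) ∧
            ∀ v ∉ σ.frontier, g v = GTerm.const 0} := by
      rintro t ⟨σ, hσ, x, hx, g, hg1, hg2, rfl⟩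
      exact Set.mem_biUnion hσ (Set.mem_biUnion hx ⟨g, ⟨hg1, hg2⟩, rfl⟩)
    refine Set.Finite.subset ?_ hsub
    refine Set.Finite.biUnion hSgm (fun σ _ => ?_)
    refine Set.Finite.biUnion (varsOf_finite σ.head) (fun x _ => ?_)
    exact Set.Finite.image _ (funset_finite _ (frontier_finite σ) _ ih _)

/-- lists of bounded length over a finite set form a finite set -/
lemma listset_finite {α : Type} {s : Set α} (hs : s.Finite) :
    ∀ n, {l : List α | l.length ≤ n ∧ ∀ x ∈ l, x ∈ s}.Finite := by
  intro n
  induction n with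
  | zero =>
    refine (Set.finite_singleton ([] : List α)).subset ?_
    rintro l ⟨hl, -⟩
    simp [List.length_eq_zero_iff.1 (Nat.le_zero.1 hl)]
  | succ n ih =>
    refine Set.Finite.subset (Set.Finite.insert ([] : List α)
      ((hs.prod ih).image (fun p : α × List α => p.1 :: p.2))) ?_
    rintro (_ | ⟨x, l⟩) ⟨hl, hmem⟩
    · exact Set.mem_insert _ _
    · refine Set.mem_insert_of_mem _ ⟨(x, l), ⟨hmem x (by simp), ?_, ?_⟩, rfl⟩
      · simpa using hl
      · exact fun y hy => hmem y (by simp [hy])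

/-- The key invariant of the chase. -/
lemma chase_invariant {Sgm : Set (TGD P)} {D : Set (Atom P ℕ)} (hSgm : Sgm.Finite)
    (hfr : ∀ σ ∈ Sgm, σ.frontier.Nonempty) (hwa : WeaklyAcyclic Sgm) :
    ∀ i, ∀ ga ∈ chaseN D Sgm i,
      (∃ a : Atom P ℕ, (a ∈ D ∨ ∃ σ ∈ Sgm, a ∈ σ.head) ∧ ga.pred = a.pred ∧
        ga.args.length = a.args.length) ∧
      ∀ π t, occursAt t π ga → t ∈ TSet Sgm D (rank Sgm π) := by
  intro i
  induction i with
  | zero =>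
    rintro ga ⟨a, ha, rfl⟩
    constructor
    · exact ⟨a, Or.inl ha, rfl, by simp [Atom.map]⟩
    · rintro π t ⟨hpred, hget⟩
      simp only [Atom.map, List.getElem?_map] at hget
      obtain ⟨c, hc, rfl⟩ : ∃ c, a.args[π.2]? = some c ∧ t = GTerm.const c := by
        cases h : a.args[π.2]? <;> simp [h] at hget <;> simp [← hget]
      have : GTerm.const c ∈ TSet Sgm D 0 :=
        ⟨c, ⟨a, ha, List.mem_of_getElem? hc⟩, rfl⟩
      exact TSet_mono (Nat.zero_le _) this
  | succ n ih =>
    rintro ga (hga | ⟨σ, hσ, h, hhom, a, ha, rfl⟩)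
    · exact ih ga hga
    constructor
    · exact ⟨a, Or.inr ⟨σ, hσ, ha⟩, rfl, by simp [Atom.map]⟩
    rintro π t ⟨hpred, hget⟩
    simp only [Atom.map, List.getElem?_map] at hget hpred
    obtain ⟨x, hx, rfl⟩ : ∃ x, a.args[π.2]? = some x ∧ t = triggerSubst σ h x := by
      cases h' : a.args[π.2]? <;> simp [h'] at hget <;> simp [← hget]
    have hheadpos : headPosOf σ x π := ⟨a, ha, hpred, hx⟩
    -- a body-position occurrence of a body variable v
    have bodyocc : ∀ v ∈ varsOf σ.body, ∃ π₀, bodyPosOf σ v π₀ ∧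
        h v ∈ TSet Sgm D (rank Sgm π₀) := by
      rintro v ⟨a', ha', hv⟩
      obtain ⟨j, hjlt, hj⟩ := List.mem_iff_getElem.1 hv
      refine ⟨(a'.pred, j), ⟨a', ha', rfl, by simp [List.getElem?_eq_getElem hjlt, hj]⟩, ?_⟩
      have hmem : (a'.map h) ∈ chaseN D Sgm n := hhom a' ha'
      have : occursAt (h v) (a'.pred, j) (a'.map h) := by
        refine ⟨rfl, ?_⟩
        simp [Atom.map, List.getElem?_map, List.getElem?_eq_getElem hjlt, hj]
      exact (ih _ hmem).2 _ _ this
    by_cases hxf : x ∈ σ.frontier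
    · -- frontier variable: propagate along a normal edge
      obtain ⟨π₀, hbp, hmem⟩ := bodyocc x hxf.1
      have hne : normalEdge Sgm π₀ π := ⟨σ, hσ, x, hxf, hbp, hheadpos⟩
      rw [triggerSubst, if_pos hxf]
      exact TSet_mono (rank_le_of_normal hSgm hne) hmem
    · -- existential variable: a new null, via special edges
      rw [triggerSubst, if_neg hxf]
      have hxhead : x ∈ varsOf σ.head := ⟨a, ha, List.mem_of_getElem? hx⟩
      have hxex : x ∈ σ.existVars := ⟨hxhead, fun hb => hxf ⟨hb, hxhead⟩⟩
      have hspecial : ∀ v ∈ σ.frontier, ∀ π₀, bodyPosOf σ v π₀ →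
          specialEdge Sgm π₀ π := fun v hv π₀ hb =>
        ⟨σ, hσ, ⟨v, hv, hb⟩, x, hxex, hheadpos⟩
      -- rank π ≥ 1
      obtain ⟨v₀, hv₀⟩ := hfr σ hσ
      obtain ⟨π₀, hbp₀, -⟩ := bodyocc v₀ hv₀.1
      have hrk : 1 ≤ rank Sgm π :=
        Nat.one_le_iff_ne_zero.2 (by
          have := rank_lt_of_special hSgm hwa (hspecial v₀ hv₀ π₀ hbp₀)
          omega)
      obtain ⟨r, hr⟩ : ∃ r, rank Sgm π = r + 1 := ⟨rank Sgm π - 1, by omega⟩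
      rw [hr]
      refine Or.inr ⟨σ, hσ, x, hxhead, frRestrict σ h, ?_, ?_, rfl⟩
      · intro v hv
        obtain ⟨π₀', hbp', hmem'⟩ := bodyocc v hv.1
        have hlt := rank_lt_of_special hSgm hwa (hspecial v hv π₀' hbp')
        rw [frRestrict, if_pos hv]
        exact TSet_mono (by omega) hmem'
      · intro v hv; rw [frRestrict, if_neg hv]

end Aux


/-- If a set `Σ` of TGDs (with non-empty frontiers) is
weakly-acyclic, then for every database `D` the semi-oblivious chase
`chase(D,Σ)` is finite. -/
theorem statement17 {P : Type} (Sgm : Set (TGD P))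
    (hSgm : Sgm.Finite)
    (hfr : ∀ σ ∈ Sgm, σ.frontier.Nonempty)
    (hwa : WeaklyAcyclic Sgm) :
    ∀ D : Set (Atom P ℕ), D.Finite → (chase D Sgm).Finite := by
  intro D hD
  have hTS := TSet_finite hSgm hD (posSet Sgm).ncard
  have hA0 : {a : Atom P ℕ | a ∈ D ∨ ∃ σ ∈ Sgm, a ∈ σ.head}.Finite := by
    refine Set.Finite.subset
      (hD.union (Set.Finite.biUnion hSgm (fun σ _ => σ.head.finite_toSet))) ?_
    rintro a (h | ⟨σ, hσ, h⟩)
    · exact Or.inl h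
    · exact Or.inr (Set.mem_biUnion hσ h)
  have hsub : chase D Sgm ⊆ ⋃ a ∈ {a : Atom P ℕ | a ∈ D ∨ ∃ σ ∈ Sgm, a ∈ σ.head},
      {ga : Atom P (GTerm P) | ga.pred = a.pred ∧ ga.args.length = a.args.length ∧
        ∀ t ∈ ga.args, t ∈ TSet Sgm D (posSet Sgm).ncard} := by
    rintro ga hga
    obtain ⟨i, hi⟩ := Set.mem_iUnion.1 hga
    obtain ⟨⟨a, ha, hpred, hlen⟩, hocc⟩ := chase_invariant hSgm hfr hwa i ga hi
    refine Set.mem_biUnion ha ⟨hpred, hlen, fun t ht => ?_⟩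
    obtain ⟨j, hj⟩ := List.mem_iff_getElem?.1 ht
    exact TSet_mono (rank_le_ncard hSgm _) (hocc (ga.pred, j) t ⟨rfl, hj⟩)
  refine Set.Finite.subset (Set.Finite.biUnion hA0 (fun a _ => ?_)) hsub
  apply Set.Finite.of_finite_image (f := fun ga => ga.args)
  · refine Set.Finite.subset (listset_finite hTS a.args.length) ?_
    rintro l ⟨ga, ⟨hp, hl, hts⟩, rfl⟩
    exact ⟨le_of_eq hl, hts⟩
  · rintro ga ⟨hp, -, -⟩ ga' ⟨hp', -, -⟩ heq
    cases ga; cases ga'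
    simp_all
end
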